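/- Let d ≥ 1, let M be a positive integer with M ≥ 2, and let J, g : ℤ^d → ℝ be ℤ^d-symmetric with Σ_x |x|^M (|J(x)| + |g(x)|) < ∞, Ĵ(0) = Σ_x J(x) = 1, and Ĵ(0) − Ĵ(k) ≥ K₀|k|²/(2d) for all k ∈ [−π,π]^d, for some K₀ > 0. Define Ĝ(k) = ĝ(k)/(1 − Ĵ(k)) for k ∈ [−π,π]^d, k ≠ 0. Then for every integer m with 1 ≤ m ≤ M there is a finite constant c (depending on m, d, K₀ and the moments of J and g) such that |∂₁^m Ĝ(k)| ≤ c/|k|^{2+m} for all k ∈ [−π,π]^d with k ≠ 0, where ∂₁ = ∂/∂k₁. -/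

import Mathlib

open MeasureTheory Filter

noncomputable section

/-- The odd kernel
`L_{o,ε}(p) = (2πi Γ(ε))⁻¹ ∫_0^∞ t^{ε-1} sin p / (cosh t - cos p) dt`. -/
def Lo (ε : ℝ) (p : ℝ) : ℂ :=
  (2 * (Real.pi : ℂ) * Complex.I * (Real.Gamma ε : ℂ))⁻¹ *
    ((∫ t in Set.Ioi (0 : ℝ),
        t ^ (ε - 1) * Real.sin p / (Real.cosh t - Real.cos p) : ℝ) : ℂ)

/-- The even kernel
`L_{e,ε}(p) = (2π Γ(ε))⁻¹ ∫_0^∞ t^{ε-1} (cos p - e^{-t}) / (cosh t - cos p) dt`. -/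
def Le (ε : ℝ) (p : ℝ) : ℂ :=
  (2 * (Real.pi : ℂ) * (Real.Gamma ε : ℂ))⁻¹ *
    ((∫ t in Set.Ioi (0 : ℝ),
        t ^ (ε - 1) * (Real.cos p - Real.exp (-t)) / (Real.cosh t - Real.cos p) : ℝ) : ℂ)

/-- Inner product `k·x` for `ℤ^{1+m}` in split coordinates `(x₁, x⃗)`. -/
def dotS {m : ℕ} (k : ℝ × (Fin m → ℝ)) (x : ℤ × (Fin m → ℤ)) : ℝ :=
  k.1 * (x.1 : ℝ) + ∑ i, k.2 i * (x.2 i : ℝ)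

/-- Euclidean norm of `k = (k₁, k⃗) ∈ ℝ^{1+m}`. -/
def normS {m : ℕ} (k : ℝ × (Fin m → ℝ)) : ℝ :=
  Real.sqrt (k.1 ^ 2 + ∑ i, (k.2 i) ^ 2)

/-- Euclidean norm of `k⃗ ∈ ℝ^m`. -/
def normV {m : ℕ} (kv : Fin m → ℝ) : ℝ := Real.sqrt (∑ i, (kv i) ^ 2)

/-- Euclidean norm of `x = (x₁, x⃗) ∈ ℤ^{1+m}`. -/
def normZS {m : ℕ} (x : ℤ × (Fin m → ℤ)) : ℝ :=
  Real.sqrt ((x.1 : ℝ) ^ 2 + ∑ i, ((x.2 i : ℝ)) ^ 2)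

/-- The box `[-π,π]^{1+m}` in split coordinates. -/
def boxS (m : ℕ) : Set (ℝ × (Fin m → ℝ)) :=
  (Set.Icc (-Real.pi) Real.pi) ×ˢ
    (Set.Icc (fun _ => -Real.pi) (fun _ => Real.pi))

/-- The box `[-π,π]^m`. -/
def boxV (m : ℕ) : Set (Fin m → ℝ) :=
  Set.Icc (fun _ => -Real.pi) (fun _ => Real.pi)

/-- `ℤ^{1+m}`-symmetry in split coordinates: invariance under reflection of any
coordinate and under permutations of the coordinates (including swapping the
first coordinate with any other). -/
def ZdSymmS {m : ℕ} (f : ℤ × (Fin m → ℤ) → ℝ) : Prop :=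
  (∀ x : ℤ × (Fin m → ℤ), f (-x.1, x.2) = f x) ∧
  (∀ (x : ℤ × (Fin m → ℤ)) (i : Fin m),
    f (x.1, Function.update x.2 i (-(x.2 i))) = f x) ∧
  (∀ (x : ℤ × (Fin m → ℤ)) (σ : Equiv.Perm (Fin m)),
    f (x.1, fun i => x.2 (σ i)) = f x) ∧
  (∀ (x : ℤ × (Fin m → ℤ)) (i : Fin m),
    f (x.2 i, Function.update x.2 i x.1) = f x)

/-- The Fourier transform `f̂(k) = Σ_x f(x) e^{-ik·x}` (real, via cosine, for
`ℤ^d`-symmetric `f`), in split coordinates. -/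
def JhatS {m : ℕ} (J : ℤ × (Fin m → ℤ) → ℝ) (k : ℝ × (Fin m → ℝ)) : ℝ :=
  ∑' x : ℤ × (Fin m → ℤ), J x * Real.cos (dotS k x)

/-- `Ĝ(k) = ĝ(k)/(1 - Ĵ(k))`. -/
def GhatS {m : ℕ} (J g : ℤ × (Fin m → ℤ) → ℝ) (k : ℝ × (Fin m → ℝ)) : ℝ :=
  JhatS g k / (1 - JhatS J k)

/-!
For fixed `k⃗`, `t ↦ Ĵ(t, k⃗)` and `t ↦ ĝ(t, k⃗)` are cosine series in `t` whose `j`-th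
derivatives are bounded by the first-coordinate moments `∑ |f x| |x₁|^j`. Since `J` is
symmetric under `x₁ ↦ -x₁`, `Ĵ` is even in `k₁`, so `∂₁Ĵ` vanishes at `k₁ = 0` and
`|∂₁Ĵ(k)| ≤ C |k₁| ≤ C |k|`. Thus every derivative `∂₁^l (1 - Ĵ)` is `O(|k|^(2-l))`, while
`1 - Ĵ(k) ≥ a |k|²`. Applying the Leibniz rule to `ĝ = Ĝ · (1 - Ĵ)` expresses
`(1 - Ĵ) ∂₁^m Ĝ` through the lower derivatives of `Ĝ`, and induction on `m` gives
`|∂₁^m Ĝ(k)| ≤ c_m / |k|^(2+m)`.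
-/

open Real Filter Topology Finset

section CosineSeries

variable {ι : Type*}

def cosSeries (c ω φ : ι → ℝ) (t : ℝ) : ℝ := ∑' i, c i * cos (t * ω i + φ i)

variable {c ω φ : ι → ℝ}

lemma norm_mul_cos_le (a u : ℝ) : ‖a * cos u‖ ≤ |a| := by
  rw [norm_mul, norm_eq_abs, norm_eq_abs]
  exact mul_le_of_le_one_right (abs_nonneg a) (abs_cos_le_one u)

lemma summable_mul_cos (hc : Summable fun i => |c i|) (u : ι → ℝ) :
    Summable fun i => c i * cos (u i) :=
  hc.of_norm_bounded fun _ => norm_mul_cos_le _ _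

lemma abs_cosSeries_le (hc : Summable fun i => |c i|) (t : ℝ) :
    |cosSeries c ω φ t| ≤ ∑' i, |c i| := by
  rw [← norm_eq_abs]
  exact tsum_of_norm_bounded hc.hasSum fun i => norm_mul_cos_le _ _

lemma continuous_cosSeries (hc : Summable fun i => |c i|) : Continuous (cosSeries c ω φ) :=
  continuous_tsum (fun _ => by fun_prop) hc fun _ _ => norm_mul_cos_le _ _

lemma hasDerivAt_cosSeries (hc : Summable fun i => |c i|)
    (hcω : Summable fun i => |c i * ω i|) (t : ℝ) :
    HasDerivAt (cosSeries c ω φ)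
      (cosSeries (fun i => c i * ω i) ω (fun i => φ i + π / 2) t) t := by
  refine hasDerivAt_tsum (g := fun i s => c i * cos (s * ω i + φ i))
    (g' := fun i s => c i * ω i * cos (s * ω i + (φ i + π / 2))) (y₀ := 0) hcω
    (fun i s => ?_) (fun _ _ => norm_mul_cos_le _ _) (summable_mul_cos hc _) t
  have h := (((hasDerivAt_mul_const (x := s) (ω i)).add_const (φ i)).cos).const_mul (c i)
  rwa [← add_assoc, cos_add_pi_div_two, show c i * ω i * -sin (s * ω i + φ i) =
    c i * (-sin (s * ω i + φ i) * ω i) by ring]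

lemma iteratedDeriv_cosSeries {n : ℕ} (hs : ∀ j ≤ n, Summable fun i => |c i| * |ω i| ^ j) :
    iteratedDeriv n (cosSeries c ω φ) =
      cosSeries (fun i => c i * ω i ^ n) ω (fun i => φ i + n * (π / 2)) := by
  induction n generalizing c φ with
  | zero => simp
  | succ n ih =>
    have hderiv : deriv (cosSeries c ω φ) =
        cosSeries (fun i => c i * ω i) ω (fun i => φ i + π / 2) :=
      funext fun t => (hasDerivAt_cosSeries (by simpa using hs 0 (by omega))
        (by simpa [abs_mul] using hs 1 (by omega)) t).deriv
    rw [iteratedDeriv_succ', hderiv, ih fun j hj =>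
      (hs (j + 1) (by omega)).congr fun i => by rw [abs_mul, pow_succ']; ring]
    congr 1 <;> funext i <;> push_cast <;> ring

lemma contDiff_cosSeries {n : ℕ} (hs : ∀ j ≤ n, Summable fun i => |c i| * |ω i| ^ j) :
    ContDiff ℝ n (cosSeries c ω φ) := by
  refine contDiff_nat_iff_iteratedDeriv.2 ⟨fun j hj => ?_, fun j hj => ?_⟩
  · rw [iteratedDeriv_cosSeries fun l hl => hs l (by omega)]
    exact continuous_cosSeries ((hs j hj).congr fun i => by rw [abs_mul, abs_pow])
  · rw [iteratedDeriv_cosSeries fun l hl => hs l (by omega)]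
    exact fun t => (hasDerivAt_cosSeries ((hs j hj.le).congr fun i => by rw [abs_mul, abs_pow])
      ((hs (j + 1) hj).congr fun i => by rw [abs_mul, abs_mul, abs_pow, pow_succ]; ring)
      t).differentiableAt

lemma abs_iteratedDeriv_cosSeries_le {n : ℕ}
    (hs : ∀ j ≤ n, Summable fun i => |c i| * |ω i| ^ j) (t : ℝ) :
    |iteratedDeriv n (cosSeries c ω φ) t| ≤ ∑' i, |c i| * |ω i| ^ n := by
  rw [iteratedDeriv_cosSeries hs]
  simpa only [abs_mul, abs_pow] using abs_cosSeries_le (c := fun i => c i * ω i ^ n)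
    ((hs n le_rfl).congr fun i => by rw [abs_mul, abs_pow]) t

end CosineSeries

lemma abs_deriv_le_mul_abs_of_even {f : ℝ → ℝ} {C : ℝ} (heven : Function.Even f)
    (hf' : Differentiable ℝ (deriv f)) (hC : ∀ t, |deriv (deriv f) t| ≤ C) (t : ℝ) :
    |deriv f t| ≤ C * |t| := by
  have h0 : deriv f 0 = 0 := by
    have h := deriv_comp_neg (f := f) (x := 0)
    rw [show (fun x => f (-x)) = f from funext heven, neg_zero] at h
    linarith
  simpa [h0] using convex_univ.norm_image_sub_le_of_norm_deriv_le (fun x _ => hf' x)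
    (fun x _ => hC x) (Set.mem_univ 0) (Set.mem_univ t)

/-- Solving the Leibniz expansion of `N = (N / F) * F` for the top derivative of `N / F`
produces this recursion; see `abs_iteratedDeriv_div_mul_pow_le`. -/
def quotientDerivBound (a A B : ℝ) : ℕ → ℝ
  | m => (A + B * ∑ j : Fin m, (m.choose j : ℝ) * quotientDerivBound a A B j) / a

lemma quotientDerivBound_eq (a A B : ℝ) (m : ℕ) :
    quotientDerivBound a A B m =
      (A + B * ∑ j ∈ range m, (m.choose j : ℝ) * quotientDerivBound a A B j) / a := by
  rw [quotientDerivBound,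
    Fin.sum_univ_eq_sum_range (fun j => (m.choose j : ℝ) * quotientDerivBound a A B j)]

/-- The hypotheses say that at scale `Δ` the numerator is of size `1` and the denominator of
size `Δ²`, each derivative costing a factor `Δ⁻¹`. -/
theorem abs_iteratedDeriv_div_mul_pow_le {N F : ℝ → ℝ} {n : ℕ} {t₀ Δ a A B : ℝ}
    (hN : ContDiffAt ℝ n N t₀) (hF : ContDiffAt ℝ n F t₀) (hΔ : 0 < Δ) (ha : 0 < a)
    (hF₀ : a * Δ ^ 2 ≤ F t₀) (hNj : ∀ j ≤ n, |iteratedDeriv j N t₀| * Δ ^ j ≤ A)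
    (hFj : ∀ j, 1 ≤ j → j ≤ n → |iteratedDeriv j F t₀| * Δ ^ j ≤ B * Δ ^ 2)
    {m : ℕ} (hm : m ≤ n) :
    |iteratedDeriv m (fun t => N t / F t) t₀| * Δ ^ (2 + m) ≤ quotientDerivBound a A B m := by
  induction m using Nat.strong_induction_on with
  | _ m ih =>
  set G := fun t => N t / F t
  have hFpos : 0 < F t₀ := lt_of_lt_of_le (by positivity) hF₀
  have hGF : (fun t => G t * F t) =ᶠ[𝓝 t₀] N := by
    filter_upwards [hF.continuousAt.eventually_ne hFpos.ne'] with t ht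
    exact div_mul_cancel₀ _ ht
  have hmn : (m : WithTop ℕ∞) ≤ n := by exact_mod_cast hm
  have hleibniz : iteratedDeriv m N t₀ = iteratedDeriv m G t₀ * F t₀ +
      ∑ j ∈ range m, m.choose j * iteratedDeriv j G t₀ * iteratedDeriv (m - j) F t₀ := by
    rw [← hGF.iteratedDeriv_eq, iteratedDeriv_fun_mul (f := G)
      ((hN.div hF hFpos.ne').of_le hmn) (hF.of_le hmn), sum_range_succ]
    simp only [Nat.choose_self, Nat.cast_one, one_mul, Nat.sub_self, iteratedDeriv_zero]
    ring
  have hterm : ∀ j ∈ range m,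
      |m.choose j * iteratedDeriv j G t₀ * iteratedDeriv (m - j) F t₀| * Δ ^ m ≤
        B * (m.choose j * quotientDerivBound a A B j) := by
    intro j hj
    have hjm := mem_range.1 hj
    have hG := ih j hjm (by omega)
    have hprod := mul_le_mul hG (hFj (m - j) (by omega) (by omega)) (by positivity)
      ((by positivity : (0 : ℝ) ≤ _).trans hG)
    have hpow : Δ ^ m * Δ ^ 2 = Δ ^ (2 + j) * Δ ^ (m - j) := by
      rw [← pow_add, ← pow_add]; congr 1; omega
    rw [abs_mul, abs_mul, Nat.abs_cast]
    refine le_of_mul_le_mul_right ?_ (pow_pos hΔ 2)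
    calc m.choose j * |iteratedDeriv j G t₀| * |iteratedDeriv (m - j) F t₀| * Δ ^ m * Δ ^ 2
        = m.choose j * (|iteratedDeriv j G t₀| * Δ ^ (2 + j) *
            (|iteratedDeriv (m - j) F t₀| * Δ ^ (m - j))) := by
          rw [mul_assoc _ (Δ ^ m), hpow]; ring
      _ ≤ m.choose j * (quotientDerivBound a A B j * (B * Δ ^ 2)) := by gcongr
      _ = B * (m.choose j * quotientDerivBound a A B j) * Δ ^ 2 := by ring
  set S := ∑ j ∈ range m, m.choose j * iteratedDeriv j G t₀ * iteratedDeriv (m - j) F t₀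
  have hS : |S| * Δ ^ m ≤ B * ∑ j ∈ range m, m.choose j * quotientDerivBound a A B j := by
    rw [mul_sum]
    calc |S| * Δ ^ m
        ≤ (∑ j ∈ range m, |m.choose j * iteratedDeriv j G t₀ * iteratedDeriv (m - j) F t₀|) *
            Δ ^ m := by gcongr; exact abs_sum_le_sum_abs _ _
      _ ≤ _ := by rw [sum_mul]; exact sum_le_sum hterm
  rw [quotientDerivBound_eq, le_div_iff₀ ha]
  calc |iteratedDeriv m G t₀| * Δ ^ (2 + m) * a
      = |iteratedDeriv m G t₀| * (a * Δ ^ 2) * Δ ^ m := by ring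
    _ ≤ |iteratedDeriv m G t₀| * F t₀ * Δ ^ m := by gcongr
    _ = |iteratedDeriv m N t₀ - S| * Δ ^ m := by
      rw [hleibniz, add_sub_cancel_right, abs_mul, abs_of_pos hFpos]
    _ ≤ (|iteratedDeriv m N t₀| + |S|) * Δ ^ m := by gcongr; exact abs_sub _ _
    _ ≤ _ := by rw [add_mul]; exact add_le_add (hNj m hm) hS

section Lattice

variable {d' : ℕ}

lemma one_le_sq_intCast {n : ℤ} (hn : n ≠ 0) : (1 : ℝ) ≤ (n : ℝ) ^ 2 := by
  exact_mod_cast (one_le_sq_iff_one_le_abs n).2 (Int.one_le_abs hn)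

lemma one_le_normZS {x : ℤ × (Fin d' → ℤ)} (hx : x ≠ 0) : 1 ≤ normZS x := by
  have hsum : ∀ i, ((x.2 i : ℤ) : ℝ) ^ 2 ≤ ∑ i, ((x.2 i : ℤ) : ℝ) ^ 2 := fun i =>
    single_le_sum (f := fun i => ((x.2 i : ℤ) : ℝ) ^ 2) (fun _ _ => sq_nonneg _) (mem_univ i)
  rw [normZS, Real.one_le_sqrt]
  by_cases h1 : x.1 = 0
  · obtain ⟨i, hi⟩ := Function.ne_iff.1 fun h2 => hx (Prod.ext h1 h2)
    nlinarith [one_le_sq_intCast hi, hsum i, sq_nonneg (x.1 : ℝ)]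
  · nlinarith [one_le_sq_intCast h1, (sum_nonneg fun i _ => sq_nonneg _ :
      (0 : ℝ) ≤ ∑ i, ((x.2 i : ℤ) : ℝ) ^ 2)]

lemma abs_fst_le_normZS (x : ℤ × (Fin d' → ℤ)) : |(x.1 : ℝ)| ≤ normZS x :=
  Real.abs_le_sqrt (le_add_of_nonneg_right (sum_nonneg fun _ _ => sq_nonneg _))

lemma abs_fst_le_normS (k : ℝ × (Fin d' → ℝ)) : |k.1| ≤ normS k :=
  Real.abs_le_sqrt (le_add_of_nonneg_right (sum_nonneg fun _ _ => sq_nonneg _))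

lemma normS_pos {k : ℝ × (Fin d' → ℝ)} (hk : k ≠ 0) : 0 < normS k := by
  rw [normS, Real.sqrt_pos]
  by_cases h1 : k.1 = 0
  · obtain ⟨i, hi⟩ := Function.ne_iff.1 fun h2 => hk (Prod.ext h1 h2)
    have := single_le_sum (f := fun i => k.2 i ^ 2) (fun _ _ => sq_nonneg _) (mem_univ i)
    nlinarith [pow_pos (abs_pos.2 hi) 2, sq_abs (k.2 i), sq_nonneg k.1]
  · nlinarith [pow_pos (abs_pos.2 h1) 2, sq_abs k.1,
      (sum_nonneg fun i _ => sq_nonneg _ : (0 : ℝ) ≤ ∑ i, k.2 i ^ 2)]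

lemma normS_le_of_mem_boxS {k : ℝ × (Fin d' → ℝ)} (hk : k ∈ boxS d') :
    normS k ≤ π * (d' + 1) := by
  obtain ⟨⟨hk1, hk1'⟩, hk2, hk2'⟩ := hk
  have hsum : ∑ i, k.2 i ^ 2 ≤ d' * π ^ 2 := by
    simpa using sum_le_sum fun i (_ : i ∈ univ) => sq_le_sq' (hk2 i) (hk2' i)
  rw [normS, Real.sqrt_le_iff]
  refine ⟨by positivity, ?_⟩
  nlinarith [sq_le_sq' hk1 hk1', (Nat.cast_nonneg d' : (0 : ℝ) ≤ d'), sq_nonneg π]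

lemma summable_abs_mul_abs_fst_pow {f h : ℤ × (Fin d' → ℤ) → ℝ} {M j : ℕ}
    (hh : Summable fun x => normZS x ^ M * h x) (hfh : ∀ x, |f x| ≤ h x) (hj : j ≤ M) :
    Summable fun x => |f x| * |(x.1 : ℝ)| ^ j := by
  refine hh.of_norm_bounded_eventually ?_
  filter_upwards [(Set.finite_singleton 0).compl_mem_cofinite] with x hx
  rw [Real.norm_eq_abs, abs_mul, abs_abs, abs_pow, abs_abs, mul_comm (normZS x ^ M)]
  exact mul_le_mul (hfh x) ((pow_le_pow_left₀ (abs_nonneg _) (abs_fst_le_normZS x) j).trans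
    (pow_le_pow_right₀ (one_le_normZS hx) hj)) (by positivity) ((abs_nonneg _).trans (hfh x))

lemma JhatS_zero {f : ℤ × (Fin d' → ℤ) → ℝ} {s : ℝ} (hf : HasSum f s) : JhatS f 0 = s := by
  simp [JhatS, dotS, hf.tsum_eq]

lemma JhatS_neg_fst {f : ℤ × (Fin d' → ℤ) → ℝ} (hf : ∀ x, f (-x.1, x.2) = f x)
    (t : ℝ) (kv : Fin d' → ℝ) : JhatS f (-t, kv) = JhatS f (t, kv) := by
  rw [JhatS, ← ((Equiv.neg ℤ).prodCongr (Equiv.refl _)).tsum_eq]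
  refine tsum_congr fun x => ?_
  change f (-x.1, x.2) * cos (dotS (-t, kv) (-x.1, x.2)) = f x * cos (dotS (t, kv) x)
  simp only [hf, dotS, Int.cast_neg, neg_mul_neg]

lemma JhatS_slice (f : ℤ × (Fin d' → ℤ) → ℝ) (kv : Fin d' → ℝ) :
    (fun t => JhatS f (t, kv)) = cosSeries f (fun x => (x.1 : ℝ)) (fun x => ∑ i, kv i * x.2 i) :=
  rfl

end Lattice

section Moments

variable {d' : ℕ}

def fstMoment (f : ℤ × (Fin d' → ℤ) → ℝ) (j : ℕ) : ℝ := ∑' x, |f x| * |(x.1 : ℝ)| ^ j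

def momentBound (f : ℤ × (Fin d' → ℤ) → ℝ) (M : ℕ) (R : ℝ) : ℝ :=
  ∑ j ∈ range (M + 1), fstMoment f j * R ^ j

lemma fstMoment_nonneg (f : ℤ × (Fin d' → ℤ) → ℝ) (j : ℕ) : 0 ≤ fstMoment f j :=
  tsum_nonneg fun _ => by positivity

lemma fstMoment_mul_pow_le_momentBound (f : ℤ × (Fin d' → ℤ) → ℝ) {M j : ℕ} {R : ℝ}
    (hR : 0 ≤ R) (hj : j ≤ M) : fstMoment f j * R ^ j ≤ momentBound f M R :=
  single_le_sum (f := fun j => fstMoment f j * R ^ j)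
    (fun i _ => mul_nonneg (fstMoment_nonneg f i) (pow_nonneg hR i)) (mem_range.2 (by omega))

variable {f : ℤ × (Fin d' → ℤ) → ℝ} {M : ℕ}

lemma contDiff_JhatS_slice (hs : ∀ j ≤ M, Summable fun x => |f x| * |(x.1 : ℝ)| ^ j)
    (kv : Fin d' → ℝ) : ContDiff ℝ M (fun t => JhatS f (t, kv)) := by
  rw [JhatS_slice]
  exact contDiff_cosSeries hs

lemma abs_iteratedDeriv_JhatS_slice_le
    (hs : ∀ j ≤ M, Summable fun x => |f x| * |(x.1 : ℝ)| ^ j)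
    {j : ℕ} (hj : j ≤ M) (kv : Fin d' → ℝ) (t : ℝ) :
    |iteratedDeriv j (fun t => JhatS f (t, kv)) t| ≤ fstMoment f j := by
  rw [JhatS_slice]
  exact abs_iteratedDeriv_cosSeries_le (fun i hi => hs i (by omega)) t

lemma abs_deriv_JhatS_slice_le
    (hs : ∀ j ≤ M, Summable fun x => |f x| * |(x.1 : ℝ)| ^ j)
    (hsym : ∀ x, f (-x.1, x.2) = f x) (hM : 2 ≤ M)
    (kv : Fin d' → ℝ) (t : ℝ) :
    |deriv (fun t => JhatS f (t, kv)) t| ≤ fstMoment f 2 * |t| :=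
  abs_deriv_le_mul_abs_of_even (fun t => JhatS_neg_fst hsym t kv)
    ((contDiff_JhatS_slice hs kv).of_le (by exact_mod_cast hM)).differentiable_deriv_two
    (fun t => by simpa [iteratedDeriv_succ] using abs_iteratedDeriv_JhatS_slice_le hs hM kv t) t

lemma abs_iteratedDeriv_JhatS_slice_mul_pow_le
    (hs : ∀ j ≤ M, Summable fun x => |f x| * |(x.1 : ℝ)| ^ j)
    {k : ℝ × (Fin d' → ℝ)} {R : ℝ}
    (hkR : normS k ≤ R) {j : ℕ} (hj : j ≤ M) :
    |iteratedDeriv j (fun t => JhatS f (t, k.2)) k.1| * normS k ^ j ≤ momentBound f M R := by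
  have hΔ : 0 ≤ normS k := Real.sqrt_nonneg _
  calc _ ≤ fstMoment f j * R ^ j := mul_le_mul (abs_iteratedDeriv_JhatS_slice_le hs hj _ _)
        (pow_le_pow_left₀ hΔ hkR j) (by positivity) (fstMoment_nonneg f j)
    _ ≤ _ := fstMoment_mul_pow_le_momentBound f (hΔ.trans hkR) hj

lemma abs_iteratedDeriv_one_sub_JhatS_slice_mul_pow_le
    (hs : ∀ j ≤ M, Summable fun x => |f x| * |(x.1 : ℝ)| ^ j)
    (hsym : ∀ x, f (-x.1, x.2) = f x)
    (hM : 2 ≤ M) {k : ℝ × (Fin d' → ℝ)} {R : ℝ} (hR : 1 ≤ R) (hkR : normS k ≤ R) {l : ℕ}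
    (hl : 1 ≤ l) (hlM : l ≤ M) :
    |iteratedDeriv l (fun t => 1 - JhatS f (t, k.2)) k.1| * normS k ^ l ≤
      momentBound f M R * normS k ^ 2 := by
  have hΔ : 0 ≤ normS k := Real.sqrt_nonneg _
  rw [iteratedDeriv_const_sub (by omega), iteratedDeriv_neg, abs_neg]
  obtain rfl | ⟨i, rfl⟩ : l = 1 ∨ ∃ i, l = i + 2 := by
    rcases l with _ | _ | i <;> simp_all
  · calc |iteratedDeriv 1 (fun t => JhatS f (t, k.2)) k.1| * normS k ^ 1
        ≤ fstMoment f 2 * |k.1| * normS k := by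
          rw [iteratedDeriv_one, pow_one]
          gcongr
          exact abs_deriv_JhatS_slice_le hs hsym hM k.2 k.1
      _ ≤ fstMoment f 2 * R ^ 2 * normS k ^ 2 := by
          have hμ := fstMoment_nonneg f 2
          nlinarith [mul_le_mul_of_nonneg_left
              (mul_le_mul_of_nonneg_right (abs_fst_le_normS k) hΔ) hμ,
            mul_le_mul_of_nonneg_right (one_le_pow₀ (n := 2) hR)
              (mul_nonneg hμ (sq_nonneg (normS k)))]
      _ ≤ _ := by gcongr; exact fstMoment_mul_pow_le_momentBound f (by linarith) hM
  · calc |iteratedDeriv (i + 2) (fun t => JhatS f (t, k.2)) k.1| * normS k ^ (i + 2)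
        = |iteratedDeriv (i + 2) (fun t => JhatS f (t, k.2)) k.1| * normS k ^ i *
            normS k ^ 2 := by ring
      _ ≤ fstMoment f (i + 2) * R ^ (i + 2) * normS k ^ 2 := by
          refine mul_le_mul_of_nonneg_right ?_ (sq_nonneg _)
          exact mul_le_mul (abs_iteratedDeriv_JhatS_slice_le hs hlM _ _)
            ((pow_le_pow_left₀ hΔ hkR i).trans (pow_le_pow_right₀ hR (Nat.le_add_right i 2)))
            (by positivity) (fstMoment_nonneg f _)
      _ ≤ _ := by gcongr; exact fstMoment_mul_pow_le_momentBound f (by linarith) hlM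

end Moments

theorem Ghat_derivative_bounds_general
    (d' : ℕ) (M : ℕ) (hM : 2 ≤ M) (K₀ : ℝ) (hK₀ : 0 < K₀)
    (J g : ℤ × (Fin d' → ℤ) → ℝ)
    (hJsymm : ZdSymmS J)
    (hmom : Summable (fun x => normZS x ^ M * (|J x| + |g x|)))
    (h1 : HasSum J 1)
    (h2 : ∀ k ∈ boxS d',
      K₀ * normS k ^ 2 / (2 * ((d' : ℝ) + 1)) ≤ JhatS J 0 - JhatS J k) :
    ∀ m : ℕ, 1 ≤ m → m ≤ M → ∃ c : ℝ,
      ∀ k : ℝ × (Fin d' → ℝ), k ∈ boxS d' → k ≠ 0 →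
        |iteratedDeriv m (fun t => GhatS J g (t, k.2)) k.1|
          ≤ c / normS k ^ (2 + m) := by
  intro m _ hmM
  have hR : 1 ≤ π * (d' + 1) := by
    nlinarith [pi_gt_three, (Nat.cast_nonneg d' : (0 : ℝ) ≤ d')]
  have hsJ : ∀ j ≤ M, Summable fun x => |J x| * |(x.1 : ℝ)| ^ j := fun _ =>
    summable_abs_mul_abs_fst_pow hmom fun _ => le_add_of_nonneg_right (abs_nonneg _)
  have hsg : ∀ j ≤ M, Summable fun x => |g x| * |(x.1 : ℝ)| ^ j := fun _ =>
    summable_abs_mul_abs_fst_pow hmom fun _ => le_add_of_nonneg_left (abs_nonneg _)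
  refine ⟨quotientDerivBound (K₀ / (2 * (d' + 1))) (momentBound g M (π * (d' + 1)))
    (momentBound J M (π * (d' + 1))) m, fun k hk hk0 => ?_⟩
  have hkR := normS_le_of_mem_boxS hk
  have hinfrared : K₀ / (2 * (d' + 1)) * normS k ^ 2 ≤ 1 - JhatS J (k.1, k.2) := by
    have := h2 k hk
    rw [JhatS_zero h1] at this
    linarith [show K₀ / (2 * (d' + 1)) * normS k ^ 2 = K₀ * normS k ^ 2 / (2 * (d' + 1)) by ring]
  rw [le_div_iff₀ (pow_pos (normS_pos hk0) _)]
  exact abs_iteratedDeriv_div_mul_pow_le (contDiff_JhatS_slice hsg k.2).contDiffAt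
    (contDiffAt_const.sub (contDiff_JhatS_slice hsJ k.2).contDiffAt) (normS_pos hk0)
    (by positivity) hinfrared
    (fun j hj => abs_iteratedDeriv_JhatS_slice_mul_pow_le hsg hkR hj)
    (fun l hl hlM => abs_iteratedDeriv_one_sub_JhatS_slice_mul_pow_le hsJ hJsymm.1 hM hR hkR hl hlM)
    hmM

/-- Derivative bounds for `Ĝ = ĝ/(1-Ĵ)` (Lemma 4.1 of the paper): with `M`-th
moments of `J` and `g` finite, `Ĵ(0) = 1` and the infrared lower bound, one has
`|∂₁^m Ĝ(k)| ≤ c/|k|^{2+m}` for `1 ≤ m ≤ M`. Here the dimension is `d = d'+1 ≥ 1`. -/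
theorem Ghat_derivative_bounds
    (d' : ℕ) (M : ℕ) (hM : 2 ≤ M) (K₀ : ℝ) (hK₀ : 0 < K₀)
    (J g : ℤ × (Fin d' → ℤ) → ℝ)
    (hJsymm : ZdSymmS J) (hgsymm : ZdSymmS g)
    (hmom : Summable (fun x => normZS x ^ M * (|J x| + |g x|)))
    (h1 : HasSum J 1)
    (h2 : ∀ k ∈ boxS d',
      K₀ * normS k ^ 2 / (2 * ((d' : ℝ) + 1)) ≤ JhatS J 0 - JhatS J k) :
    ∀ m : ℕ, 1 ≤ m → m ≤ M → ∃ c : ℝ,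
      ∀ k : ℝ × (Fin d' → ℝ), k ∈ boxS d' → k ≠ 0 →
        |iteratedDeriv m (fun t => GhatS J g (t, k.2)) k.1|
          ≤ c / normS k ^ (2 + m) :=
  Ghat_derivative_bounds_general d' M hM K₀ hK₀ J g hJsymm hmom h1 h2

end
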